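/- Define a sequence of positive integers by S_1 = 2 and S_n = 2^{S_{n-1}+2} for n > 1. For every positive integer k, set N = S_{2^{k+1}}. Then every 2-coloring (red/blue) of the edges of the Erdős–Hajnal shift graph G_N contains a monochromatic subgraph isomorphic to the Erdős–Hajnal shift graph G_k. -/

import Mathlib

/-- Vertices of the Erdős–Hajnal shift graph `G k`: pairs `(i, j)` of integers with
`1 ≤ i < j ≤ 2 ^ k + 1`. -/
def EHVert (k : ℕ) : Type :=
  {p : ℕ × ℕ // 1 ≤ p.1 ∧ p.1 < p.2 ∧ p.2 ≤ 2 ^ k + 1}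

/-- The Erdős–Hajnal shift graph `G k`: vertices `(i, j)` and `(l, m)` are adjacent
iff `j = l` or `m = i`. -/
def EHShift (k : ℕ) : SimpleGraph (EHVert k) where
  Adj p q := p.val.2 = q.val.1 ∨ q.val.2 = p.val.1
  symm := ⟨fun _ _ h => h.symm⟩
  loopless := ⟨by rintro ⟨⟨i, j⟩, h1, h2, h3⟩ h; dsimp at h; omega⟩

/-- `C`-monochromatic copy of `G` in `H` (as a subgraph): an injective map
preserving adjacency such that all images of edges of `G` receive the same color. -/
def HasMonoCopy {V W : Type*} (G : SimpleGraph V) (H : SimpleGraph W)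
    (C : Sym2 W → Bool) : Prop :=
  ∃ f : V → W, Function.Injective f ∧ (∀ u v, G.Adj u v → H.Adj (f u) (f v)) ∧
    ∃ c : Bool, ∀ u v, G.Adj u v → C s(f u, f v) = c

/-- The recurrent sequence `S₁ = 2`, `Sₙ = 2 ^ (S_{n-1} + 2)` for `n > 1`
(the value at `0` is junk). -/
def Sseq : ℕ → ℕ
  | 0 => 0
  | 1 => 2
  | n + 2 => 2 ^ (Sseq (n + 1) + 2)

/-! An edge of `EHShift N` joins `(x, y)` to `(y, z)`, so an edge colouring of `EHShift N` is a
colouring `c` of the triples `x < y < z` of `[1, 2 ^ N + 1]`, and any `t = 2 ^ k + 1` points on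
which `c` is constant span a monochromatic copy of `EHShift k`. Such points exist by the Erdős–Rado
argument: greedily extract `4 ^ t` points on which `c x y z` does not depend on `z`, then apply
Ramsey's theorem for pairs to the induced colouring of pairs `(x, y)`. This needs only
`2 ^ 16 ^ t` points, and `16 ^ t` is tiny compared with `S_{2^{k+1}}`. -/

open Finset

section LinearOrder

variable {α : Type*} [LinearOrder α]

def IsEndHomogeneous₂ (d : α → α → Bool) (S : Finset α) : Prop :=
  ∀ y ∈ S, ∀ z ∈ S, ∀ z' ∈ S, y < z → y < z' → d y z = d y z'

def IsEndHomogeneous₃ (c : α → α → α → Bool) (P S : Finset α) : Prop :=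
  ∀ y ∈ P, ∀ z ∈ S, y < z → ∀ m ∈ S, ∀ m' ∈ S, z < m → z < m' → c y z m = c y z m'

theorem exists_isEndHomogeneous₂ (d : α → α → Bool) (n : ℕ) (A : Finset α) (hA : 2 ^ n ≤ #A) :
    ∃ S ⊆ A, #S = n ∧ IsEndHomogeneous₂ d S := by
  induction n generalizing A with
  | zero => exact ⟨∅, empty_subset _, rfl, by simp [IsEndHomogeneous₂]⟩
  | succ n ih =>
    have hne : A.Nonempty := card_pos.1 (by have := Nat.one_le_two_pow (n := n + 1); omega)
    set x := A.min' hne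
    obtain ⟨col, -, hcol⟩ := exists_lt_card_fiber_of_mul_lt_card_of_maps_to
      (s := A.erase x) (t := univ) (f := d x) (n := 2 ^ n - 1) (fun _ _ => mem_univ _) (by
        rw [card_univ, Fintype.card_bool, card_erase_of_mem (A.min'_mem hne)]
        rw [pow_succ] at hA
        have := Nat.one_le_two_pow (n := n)
        omega)
    obtain ⟨S, hSA, hS, hSd⟩ := ih {z ∈ A.erase x | d x z = col} (by omega)
    have hxS : ∀ z ∈ S, x < z := fun z hz =>
      A.min'_lt_of_mem_erase_min' hne (mem_filter.1 (hSA hz)).1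
    have hup : ∀ z ∈ insert x S, x < z → z ∈ S := fun z hz hxz =>
      mem_of_mem_insert_of_ne hz hxz.ne'
    refine ⟨insert x S, insert_subset (A.min'_mem hne) (hSA.trans ((filter_subset _ _).trans
      (erase_subset _ _))), by rw [card_insert_of_notMem fun h => (hxS x h).false, hS], ?_⟩
    intro y hy z hz z' hz' hyz hyz'
    rcases mem_insert.1 hy with rfl | hy
    · rw [(mem_filter.1 (hSA (hup z hz hyz))).2, (mem_filter.1 (hSA (hup z' hz' hyz'))).2]
    · exact hSd y hy z (hup z hz ((hxS y hy).trans hyz)) z' (hup z' hz' ((hxS y hy).trans hyz'))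
        hyz hyz'

theorem exists_isEndHomogeneous₃_union (c : α → α → α → Bool) (n : ℕ) (P A : Finset α)
    (hA : 2 ^ (n * (n + #P)) ≤ #A) : ∃ S ⊆ A, #S = n ∧ IsEndHomogeneous₃ c (P ∪ S) S := by
  induction n generalizing P A with
  | zero => exact ⟨∅, empty_subset _, rfl, by simp [IsEndHomogeneous₃]⟩
  | succ n ih =>
    have hne : A.Nonempty :=
      card_pos.1 (by have := Nat.one_le_two_pow (n := (n + 1) * (n + 1 + #P)); omega)
    set x := A.min' hne
    set K := 2 ^ (n * (n + (#P + 1)))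
    -- a large class of `m ↦ (c y x m)_{y ∈ P}` lets `x` join the pivots
    obtain ⟨f, -, hf⟩ := exists_le_card_fiber_of_mul_le_card_of_maps_to
      (s := A.erase x) (t := univ) (f := fun m (y : P) => c y x m) (n := K) (fun _ _ => mem_univ _)
      univ_nonempty (by
        rw [card_univ, Fintype.card_fun, Fintype.card_bool, Fintype.card_coe,
          card_erase_of_mem (A.min'_mem hne)]
        have hK : 2 ^ #P * K * 2 ≤ 2 ^ ((n + 1) * (n + 1 + #P)) := by
          rw [← pow_add, ← pow_succ]
          exact Nat.pow_le_pow_right two_pos (by ring_nf; omega)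
        have := Nat.one_le_two_pow (n := #P)
        have := Nat.one_le_two_pow (n := n * (n + (#P + 1)))
        omega)
    obtain ⟨S, hSA, hS, hSc⟩ := ih (insert x P) {m ∈ A.erase x | (fun y : P => c y x m) = f}
      ((Nat.pow_le_pow_right two_pos (by gcongr; exact card_insert_le x P)).trans hf)
    have hxS : ∀ z ∈ S, x < z := fun z hz =>
      A.min'_lt_of_mem_erase_min' hne (mem_filter.1 (hSA hz)).1
    have hup : ∀ z ∈ insert x S, x < z → z ∈ S := fun z hz hxz =>
      mem_of_mem_insert_of_ne hz hxz.ne'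
    refine ⟨insert x S, insert_subset (A.min'_mem hne) (hSA.trans ((filter_subset _ _).trans
      (erase_subset _ _))), by rw [card_insert_of_notMem fun h => (hxS x h).false, hS], ?_⟩
    rw [union_insert, ← insert_union]
    intro y hy z hz hyz m hm m' hm' hzm hzm'
    rcases mem_insert.1 hz with rfl | hz
    · have hyP : y ∈ P := by
        rcases mem_union.1 hy with hy | hy
        · exact (mem_insert.1 hy).resolve_left hyz.ne
        · exact absurd hyz (hxS y hy).asymm
      rw [congrFun (mem_filter.1 (hSA (hup m hm hzm))).2 ⟨y, hyP⟩,
        congrFun (mem_filter.1 (hSA (hup m' hm' hzm'))).2 ⟨y, hyP⟩]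
    · exact hSc y hy z hz hyz m (hup m hm ((hxS z hz).trans hzm))
        m' (hup m' hm' ((hxS z hz).trans hzm')) hzm hzm'

theorem exists_isEndHomogeneous₃ (c : α → α → α → Bool) (n : ℕ) (A : Finset α)
    (hA : 2 ^ (n * n) ≤ #A) : ∃ S ⊆ A, #S = n ∧ IsEndHomogeneous₃ c S S := by
  simpa using exists_isEndHomogeneous₃_union c n ∅ A (by simpa using hA)

theorem exists_monochromatic_pairs (d : α → α → Bool) (t : ℕ) (A : Finset α) (hA : 4 ^ t ≤ #A) :
    ∃ B ⊆ A, #B = t ∧ ∃ col, ∀ y ∈ B, ∀ z ∈ B, y < z → d y z = col := by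
  rcases t.eq_zero_or_pos with rfl | ht
  · exact ⟨∅, empty_subset _, rfl, true, by simp⟩
  obtain ⟨S, hSA, hS, hSd⟩ := exists_isEndHomogeneous₂ d (2 * t) A (by rwa [pow_mul])
  have hne : S.Nonempty := card_pos.1 (by omega)
  set M := S.max' hne
  obtain ⟨col, -, hcol⟩ := exists_lt_card_fiber_of_mul_lt_card_of_maps_to
    (s := S.erase M) (t := univ) (f := fun y => d y M) (n := t - 1) (fun _ _ => mem_univ _) (by
      rw [card_univ, Fintype.card_bool, card_erase_of_mem (S.max'_mem hne)]
      omega)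
  obtain ⟨B, hB, hBt⟩ := exists_subset_card_eq (show t ≤ #{y ∈ S.erase M | d y M = col} by omega)
  refine ⟨B, hB.trans ((filter_subset _ _).trans ((erase_subset _ S).trans hSA)), hBt, col,
    fun y hy z hz hyz => ?_⟩
  have hyS := mem_filter.1 (hB hy)
  rw [hSd y (mem_of_mem_erase hyS.1) z (mem_of_mem_erase (mem_filter.1 (hB hz)).1) M
    (S.max'_mem hne) hyz (S.lt_max'_of_mem_erase_max' hne hyS.1)]
  exact hyS.2

theorem exists_monochromatic_triples (c : α → α → α → Bool) (t : ℕ) (A : Finset α)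
    (hA : 2 ^ 16 ^ t ≤ #A) :
    ∃ B ⊆ A, #B = t ∧ ∃ col, ∀ x ∈ B, ∀ y ∈ B, ∀ z ∈ B, x < y → y < z → c x y z = col := by
  obtain ⟨S, hSA, hS, hSc⟩ := exists_isEndHomogeneous₃ c (4 ^ t) A (by rwa [← mul_pow])
  have hne : S.Nonempty := card_pos.1 (by rw [hS]; positivity)
  set M := S.max' hne
  obtain ⟨B, hBS, hB, col, hcol⟩ := exists_monochromatic_pairs (fun y z => c y z M) t S hS.ge
  refine ⟨B, hBS.trans hSA, hB, col, fun x hx y hy z hz hxy hyz => ?_⟩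
  rw [hSc x (hBS hx) y (hBS hy) hxy z (hBS hz) M (S.max'_mem hne) hyz
    (hyz.trans_le (S.le_max' z (hBS hz)))]
  exact hcol x hx y hy hxy

end LinearOrder

def shiftTripleColor (N : ℕ) (C : Sym2 (EHVert N) → Bool) (x y z : ℕ) : Bool :=
  if h : 1 ≤ x ∧ x < y ∧ y < z ∧ z ≤ 2 ^ N + 1 then
    C s(⟨(x, y), h.1, h.2.1, by omega⟩, ⟨(y, z), by omega, h.2.2⟩)
  else false

theorem shiftTripleColor_eq {N : ℕ} (C : Sym2 (EHVert N) → Bool) (u v : EHVert N)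
    (huv : u.1.2 = v.1.1) : shiftTripleColor N C u.1.1 u.1.2 v.1.2 = C s(u, v) := by
  obtain ⟨⟨x, y⟩, hu⟩ := u
  obtain ⟨⟨y', z⟩, hv⟩ := v
  dsimp only at huv hu hv ⊢
  subst huv
  rw [shiftTripleColor, dif_pos (by omega)]

theorem hasMonoCopy_ehShift_of_orderEmbedding {k N : ℕ} (C : Sym2 (EHVert N) → Bool)
    (e : Fin (2 ^ k + 1) ↪o ℕ) (he : ∀ i, e i ∈ Icc 1 (2 ^ N + 1)) (col : Bool)
    (hcol : ∀ a b c, a < b → b < c → shiftTripleColor N C (e a) (e b) (e c) = col) :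
    HasMonoCopy (EHShift k) (EHShift N) C := by
  have hidx : ∀ p : EHVert k, p.1.1 - 1 < 2 ^ k + 1 ∧ p.1.2 - 1 < 2 ^ k + 1 := fun p => by
    have := p.2; omega
  let f : EHVert k → EHVert N := fun p =>
    ⟨(e ⟨p.1.1 - 1, (hidx p).1⟩, e ⟨p.1.2 - 1, (hidx p).2⟩), (mem_Icc.1 (he _)).1,
      e.strictMono (Fin.mk_lt_mk.2 (by have := p.2; omega)), (mem_Icc.1 (he _)).2⟩
  have hmono : ∀ p q : EHVert k, p.1.2 = q.1.1 → C s(f p, f q) = col := fun p q hpq => by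
    rw [← shiftTripleColor_eq C (f p) (f q) (by simp [f, hpq])]
    exact hcol _ _ _ (Fin.mk_lt_mk.2 (by have := p.2; omega))
      (Fin.mk_lt_mk.2 (by have := q.2; omega))
  refine ⟨f, fun p q hpq => ?_, fun p q hpq => ?_, col, fun p q hpq => ?_⟩
  · have h1 := Fin.mk.inj (e.injective (congrArg (·.1.1) hpq))
    have h2 := Fin.mk.inj (e.injective (congrArg (·.1.2) hpq))
    have := p.2; have := q.2
    exact Subtype.ext (Prod.ext (by omega) (by omega))
  · exact hpq.imp (fun h => by simp [f, h]) (fun h => by simp [f, h])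
  · rcases hpq with h | h
    · exact hmono p q h
    · rw [Sym2.eq_swap]; exact hmono q p h

theorem hasMonoCopy_ehShift_of_le {k N : ℕ} (hN : 16 ^ (2 ^ k + 1) ≤ N)
    (C : Sym2 (EHVert N) → Bool) : HasMonoCopy (EHShift k) (EHShift N) C := by
  obtain ⟨B, hBA, hB, col, hcol⟩ := exists_monochromatic_triples (shiftTripleColor N C) _
    (Icc 1 (2 ^ N + 1)) (by simpa using (Nat.pow_le_pow_right two_pos hN).trans (Nat.le_succ _))
  have hmem := B.orderEmbOfFin_mem hB
  have hlt := (B.orderEmbOfFin hB).strictMono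
  exact hasMonoCopy_ehShift_of_orderEmbedding C (B.orderEmbOfFin hB) (fun i => hBA (hmem i)) col
    fun a b c hab hbc => hcol _ (hmem a) _ (hmem b) _ (hmem c) (hlt hab) (hlt hbc)

theorem Sseq_succ {m : ℕ} (hm : 1 ≤ m) : Sseq (m + 1) = 2 ^ (Sseq m + 2) := by
  obtain ⟨n, rfl⟩ := Nat.exists_eq_add_of_le' hm
  rfl

theorem two_pow_le_Sseq {m : ℕ} (hm : 3 ≤ m) : 2 ^ (2 * m + 4) ≤ Sseq m := by
  induction m, hm using Nat.le_induction with
  | base => decide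
  | succ m hm ih =>
    rw [Sseq_succ (by omega)]
    exact Nat.pow_le_pow_right two_pos (by have := (2 * m + 4).lt_two_pow_self; omega)

/-- For every positive integer `k`, with `N = S_{2^{k+1}}`, every red-blue edge coloring of
the Erdős–Hajnal shift graph `G N` contains a monochromatic subgraph isomorphic to `G k`. -/
theorem ehShift_mono_copy_of_Sseq (k : ℕ) (hk : 1 ≤ k)
    (C : Sym2 (EHVert (Sseq (2 ^ (k + 1)))) → Bool) :
    HasMonoCopy (EHShift k) (EHShift (Sseq (2 ^ (k + 1)))) C := by
  refine hasMonoCopy_ehShift_of_le ?_ C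
  calc 16 ^ (2 ^ k + 1) = 2 ^ (2 * 2 ^ (k + 1) + 4) := by
        rw [show (16 : ℕ) = 2 ^ 4 by norm_num, ← pow_mul]; ring_nf
    _ ≤ Sseq (2 ^ (k + 1)) :=
        two_pow_le_Sseq (by have := Nat.pow_le_pow_right two_pos (by omega : 2 ≤ k + 1); omega)
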